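/- For integers N ≥ 1 and even w with 0 ≤ w ≤ 2N, the probability P(w) = C(N, w/2) / C(2N, w) that a uniformly random size-w subset of {1,...,2N} consists only of complete pairs {2j-1, 2j} satisfies P(w) ≤ (e·w/(2N))^(w/2). -/

import Mathlib

/-!
Write `w = 2k`. The bounds `C(N, k) ≤ N^k / k!`, `(2N / 2k)^(2k) ≤ C(2N, 2k)` and `k^k ≤ e^k k!`
give `C(N, k) / C(2N, 2k) ≤ (k^k / k!) (k / N)^k ≤ (e k / N)^k`.
-/

open Nat Finset

theorem Nat.pow_le_pow_mul_choose {n k : ℕ} (hkn : k ≤ n) : n ^ k ≤ k ^ k * n.choose k := by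
  have hprod : n ^ k * k ! ≤ k ^ k * (k ! * n.choose k) := by
    have pow_eq_prod (m : ℕ) : m ^ k = ∏ _i ∈ range k, m := by simp
    rw [← descFactorial_eq_factorial_mul_choose, ← descFactorial_self, descFactorial_eq_prod_range,
      descFactorial_eq_prod_range, pow_eq_prod n, pow_eq_prod k, ← prod_mul_distrib,
      ← prod_mul_distrib]
    -- termwise, `n (k - i) ≤ k (n - i)` amounts to `k i ≤ n i`
    refine prod_le_prod' fun i _ => ?_
    rw [Nat.mul_sub, Nat.mul_sub, Nat.mul_comm n k]
    exact Nat.sub_le_sub_left (Nat.mul_le_mul_right i hkn) _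
  rw [Nat.mul_left_comm, Nat.mul_comm (n ^ k)] at hprod
  exact Nat.le_of_mul_le_mul_left hprod k.factorial_pos

theorem Nat.div_pow_le_choose {α : Type*} [Semifield α] [LinearOrder α] [IsStrictOrderedRing α]
    {n k : ℕ} (hk : 0 < k) (hkn : k ≤ n) : ((n : α) / k) ^ k ≤ n.choose k := by
  rw [div_pow, div_le_iff₀' (by positivity)]
  exact_mod_cast pow_le_pow_mul_choose hkn

theorem Real.pow_le_exp_mul_factorial (k : ℕ) : (k : ℝ) ^ k ≤ Real.exp k * k ! :=
  (div_le_iff₀ (by positivity)).1 (Real.pow_div_factorial_le_exp k k.cast_nonneg k)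

theorem choose_div_choose_two_mul_le {N k : ℕ} (hkN : k ≤ N) :
    (N.choose k : ℝ) / (2 * N).choose (2 * k) ≤ (Real.exp 1 * k / N) ^ k := by
  rcases k.eq_zero_or_pos with rfl | hk
  · simp
  have hN' : (0 : ℝ) < N := by exact_mod_cast hk.trans_le hkN
  calc (N.choose k : ℝ) / (2 * N).choose (2 * k)
      ≤ ((N : ℝ) ^ k / k !) / (((2 * N : ℕ) : ℝ) / (2 * k : ℕ)) ^ (2 * k) :=
        div_le_div₀ (by positivity) (choose_le_pow_div k N) (by push_cast; positivity)
          (div_pow_le_choose (by omega) (by omega))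
    _ = (k : ℝ) ^ k / k ! * (k / N) ^ k := by
        push_cast
        rw [pow_mul, mul_div_mul_left _ _ two_ne_zero, div_pow, div_pow, div_pow]
        field_simp
        ring
    _ ≤ Real.exp k * (k / N) ^ k := by
        gcongr
        exact (div_le_iff₀ (by positivity)).2 (Real.pow_le_exp_mul_factorial k)
    _ = (Real.exp 1 * k / N) ^ k := by
        rw [← Real.exp_one_pow, mul_div_assoc, mul_pow]

theorem paired_prob_upper_bound_general (N w : ℕ) (hw : Even w)
    (hw2 : w ≤ 2 * N) :
    ((N.choose (w / 2) : ℝ) / ((2 * N).choose w : ℝ)) ≤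
      (Real.exp 1 * w / (2 * N)) ^ (w / 2) := by
  obtain ⟨k, rfl⟩ := hw
  rw [← two_mul, Nat.mul_div_cancel_left k two_pos]
  push_cast
  rw [mul_left_comm, mul_div_mul_left _ _ two_ne_zero]
  exact choose_div_choose_two_mul_le (by omega)

theorem paired_prob_upper_bound (N w : ℕ) (hN : 1 ≤ N) (hw : Even w)
    (hw2 : w ≤ 2 * N) :
    ((N.choose (w / 2) : ℝ) / ((2 * N).choose w : ℝ)) ≤
      (Real.exp 1 * w / (2 * N)) ^ (w / 2) :=
  paired_prob_upper_bound_general N w hw hw2
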